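/- arXiv:1712.03053 — 2 statements merged into one kernel-verified Lean document; each statement's English description precedes it below -/
import Mathlib

section
/- Let α > 0, K ≥ 0, and let S be a finite set of links in the Euclidean plane such that for every i ∈ S, Σ_{j ∈ S, j ≠ i, l_j ≥ l_i} min{1, l_i^α / d(i,j)^α} ≤ K. Then S can be partitioned into at most ⌊K⌋ + 1 subsets S¹, …, Sᵗ such that for each k and each link i ∈ Sᵏ, Σ_{j ∈ Sᵏ, j ≠ i, l_j ≥ l_i} min{1, l_i^α / d(i,j)^α} < 1. -/
/-!
Colour the links by decreasing length class. A link only feels links at least as long, so once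
the strictly longer links are coloured, the links of the shortest length form a game in which each
one pays, for its colour, its capped interference from the longer links and from the other
shortest links of that colour. Between links of equal length the capped interference is symmetric,
so this is a potential game and a colouring minimising the potential leaves no link able to lower
its load by recolouring. Such a load is then at most the average over the `⌊K⌋ + 1` colours, i.e.
at most `K / (⌊K⌋ + 1) < 1`.
-/

noncomputable section

open scoped BigOperators

abbrev Pt : Type := EuclideanSpace ℝ (Fin 2)

instance : DecidableEq Pt := Classical.decEq _

abbrev Link : Type := Pt × Pt

def len (i : Link) : ℝ := dist i.1 i.2

def dd (i j : Link) : ℝ :=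
  min (min (dist i.1 j.1) (dist i.1 j.2)) (min (dist i.2 j.1) (dist i.2 j.2))

def PFeasible (α β : ℝ) (S : Finset Link) (P : Link → ℝ) : Prop :=
  (∀ i ∈ S, 0 < P i) ∧
  ∀ i ∈ S, β * ∑ j ∈ S.erase i, P j / dist j.1 i.2 ^ α ≤ P i / len i ^ α

def Feasible (α β : ℝ) (S : Finset Link) : Prop := ∃ P, PFeasible α β S P

def oblPower (α τ : ℝ) : Link → ℝ := fun i => len i ^ (τ * α)

def linkDiversity (S : Finset Link) : ℝ :=
  if h : S.Nonempty then S.sup' h len / S.inf' h len else 1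

def logStar (x : ℝ) : ℕ := sInf {k : ℕ | (Real.logb 2)^[k] x ≤ 1}

def IsSpanningTreeLinks (R : Finset Pt) (S : Finset Link) : Prop :=
  (∀ i ∈ S, i.1 ∈ R ∧ i.2 ∈ R ∧ i.1 ≠ i.2) ∧
  S.card + 1 = R.card ∧
  (SimpleGraph.fromRel fun x y : {p : Pt // p ∈ R} => ((x : Pt), (y : Pt)) ∈ S).Connected

def IsMSTLinks (R : Finset Pt) (S : Finset Link) : Prop :=
  IsSpanningTreeLinks R S ∧
  ∀ S' : Finset Link, IsSpanningTreeLinks R S' → ∑ i ∈ S, len i ≤ ∑ i ∈ S', len i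

def emb (t : ℝ) : Pt := (WithLp.equiv 2 (Fin 2 → ℝ)).symm ![t, 0]

def NodeDisjoint (i j : Link) : Prop :=
  i.1 ≠ j.1 ∧ i.1 ≠ j.2 ∧ i.2 ≠ j.1 ∧ i.2 ≠ j.2

def ptDiversity (R : Finset ℝ) : ℝ :=
  if h : R.offDiag.Nonempty then
    (R.offDiag.sup' h fun p => |p.1 - p.2|) / (R.offDiag.inf' h fun p => |p.1 - p.2|)
  else 1

def G1 (T : Finset Link) : SimpleGraph {i : Link // i ∈ T} :=
  SimpleGraph.fromRel fun i j => dd ↑i ↑j ≤ min (len ↑i) (len ↑j)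

open Finset Function

namespace LocalSearch

variable {ι κ : Type*} [DecidableEq ι] [DecidableEq κ]
  (s : Finset ι) (b : ι → κ → ℝ) (w : ι → ι → ℝ)

def classWeight (π : ι → κ) (x : ι) (k : κ) : ℝ :=
  ∑ y ∈ s with y ≠ x ∧ π y = k, w x y

def load (π : ι → κ) (x : ι) (k : κ) : ℝ :=
  b x k + classWeight s w π x k

/-- Each same-coloured pair is seen from both ends, hence the `1 / 2`: for symmetric `w`,
recolouring one vertex changes the potential by exactly the change of its load. -/
def potential (π : ι → κ) : ℝ :=
  ∑ x ∈ s, (b x (π x) + classWeight s w π x (π x) / 2)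

variable {s b w}

lemma classWeight_update_self (π : ι → κ) (x : ι) (k k' : κ) :
    classWeight s w (update π x k') x k = classWeight s w π x k :=
  sum_congr (filter_congr fun _ _ => and_congr_right fun hy => by rw [update_of_ne hy])
    fun _ _ => rfl

lemma classWeight_eq_add_sum_erase {x₀ : ι} (hx₀ : x₀ ∈ s) {x : ι} (hx : x ≠ x₀)
    (π : ι → κ) (k : κ) :
    classWeight s w π x k = (if π x₀ = k then w x x₀ else 0) +
      ∑ y ∈ s.erase x₀, if y ≠ x ∧ π y = k then w x y else 0 := by
  rw [classWeight, sum_filter, ← add_sum_erase _ _ hx₀, if_congr (and_iff_right hx.symm) rfl rfl]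

lemma classWeight_update_of_ne {x₀ : ι} (hx₀ : x₀ ∈ s) {x : ι} (hx : x ≠ x₀) (π : ι → κ)
    (k k' : κ) :
    classWeight s w (update π x₀ k') x k = classWeight s w π x k +
      ((if k' = k then w x x₀ else 0) - if π x₀ = k then w x x₀ else 0) := by
  rw [classWeight_eq_add_sum_erase hx₀ hx, classWeight_eq_add_sum_erase hx₀ hx, update_self,
    sum_congr rfl fun y hy => by rw [update_of_ne (ne_of_mem_erase hy)]]
  ring

lemma classWeight_eq_sum_erase (hw : ∀ x ∈ s, ∀ y ∈ s, w x y = w y x) {x₀ : ι} (hx₀ : x₀ ∈ s)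
    (π : ι → κ) (k : κ) :
    classWeight s w π x₀ k = ∑ x ∈ s.erase x₀, if k = π x then w x x₀ else 0 := by
  rw [classWeight, sum_filter, ← sum_erase_add _ _ hx₀, if_neg (by simp), add_zero]
  refine sum_congr rfl fun x hx => ?_
  exact if_congr ((and_iff_right (ne_of_mem_erase hx)).trans eq_comm)
    (hw x₀ hx₀ x (mem_of_mem_erase hx)) rfl

lemma potential_update (hw : ∀ x ∈ s, ∀ y ∈ s, w x y = w y x) {x₀ : ι} (hx₀ : x₀ ∈ s)
    (π : ι → κ) (k : κ) :
    potential s b w (update π x₀ k) =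
      potential s b w π + (load s b w π x₀ k - load s b w π x₀ (π x₀)) := by
  have hrest : ∑ x ∈ s.erase x₀, (b x (update π x₀ k x) +
        classWeight s w (update π x₀ k) x (update π x₀ k x) / 2) =
      ∑ x ∈ s.erase x₀, (b x (π x) + classWeight s w π x (π x) / 2) +
        (classWeight s w π x₀ k - classWeight s w π x₀ (π x₀)) / 2 := by
    rw [classWeight_eq_sum_erase hw hx₀, classWeight_eq_sum_erase hw hx₀, ← sum_sub_distrib,
      sum_div, ← sum_add_distrib]
    refine sum_congr rfl fun x hx => ?_
    rw [update_of_ne (ne_of_mem_erase hx), classWeight_update_of_ne hx₀ (ne_of_mem_erase hx)]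
    ring
  rw [potential, potential, ← add_sum_erase _ _ hx₀, ← add_sum_erase _ _ hx₀, hrest, update_self,
    classWeight_update_self, load, load]
  ring

lemma potential_congr {π π' : ι → κ} (h : ∀ x ∈ s, π x = π' x) :
    potential s b w π = potential s b w π' := by
  refine sum_congr rfl fun x hx => ?_
  rw [h x hx, classWeight, classWeight, filter_congr fun y hy => by rw [h y hy]]

variable [Fintype κ]

lemma sum_load (π : ι → κ) (x : ι) :
    ∑ k, load s b w π x k = ∑ k, b x k + ∑ y ∈ s.erase x, w x y := by
  rw [← sum_fiberwise (s.erase x) π (w x)]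
  simp only [load, classWeight, sum_add_distrib]
  congr 1
  refine sum_congr rfl fun k _ => sum_congr ?_ fun _ _ => rfl
  ext y
  simp only [mem_filter, mem_erase]
  tauto

lemma card_mul_load_le {π : ι → κ} {x : ι}
    (hπ : ∀ k, load s b w π x (π x) ≤ load s b w π x k) :
    Fintype.card κ * load s b w π x (π x) ≤ ∑ k, load s b w π x k := by
  rw [← nsmul_eq_mul]
  exact card_nsmul_le_sum _ _ _ fun k _ => hπ k

variable [Nonempty κ]

lemma exists_forall_potential_le :
    ∃ π : ι → κ, ∀ π', potential s b w π ≤ potential s b w π' := by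
  let extend (σ : s → κ) : ι → κ := fun i => if h : i ∈ s then σ ⟨i, h⟩ else Classical.arbitrary κ
  obtain ⟨σ, hσ⟩ := Finite.exists_min (potential s b w ∘ extend)
  refine ⟨extend σ, fun π => (hσ fun x => π x).trans_eq (potential_congr fun x hx => ?_)⟩
  simp [extend, hx]

theorem exists_forall_load_le (hw : ∀ x ∈ s, ∀ y ∈ s, w x y = w y x) :
    ∃ π : ι → κ, ∀ x ∈ s, ∀ k, load s b w π x (π x) ≤ load s b w π x k := by
  obtain ⟨π, hπ⟩ := exists_forall_potential_le (s := s) (b := b) (w := w)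
  refine ⟨π, fun x hx k => ?_⟩
  have := hπ (update π x k)
  rw [potential_update hw hx] at this
  linarith

end LocalSearch

section Interference

variable {ι β κ : Type*} [DecidableEq ι] [LinearOrder β] (ℓ : ι → β) (f : ι → ι → ℝ)

def interference (T : Finset ι) (i : ι) : ℝ := ∑ j ∈ T with j ≠ i ∧ ℓ i ≤ ℓ j, f i j

def colourWeight [DecidableEq κ] (T : Finset ι) (c : ι → κ) (x : ι) (k : κ) : ℝ :=
  ∑ j ∈ T with c j = k, f x j

variable {ℓ f}

lemma interference_mono (hf : ∀ i j, 0 ≤ f i j) {T T' : Finset ι} (h : T ⊆ T') (i : ι) :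
    interference ℓ f T i ≤ interference ℓ f T' i :=
  sum_le_sum_of_subset_of_nonneg (filter_subset_filter _ h) fun j _ _ => hf i j

section Extension

variable [DecidableEq κ] {s : Finset ι} {m : β} (c' π : ι → κ)

lemma interference_of_min_lt {i : ι} (hmi : m < ℓ i) :
    interference ℓ f (s.filter fun j => (if ℓ j = m then π j else c' j) =
        if ℓ i = m then π i else c' i) i =
      interference ℓ f ((s.filter (ℓ · ≠ m)).filter (c' · = c' i)) i := by
  simp only [interference, filter_filter, sum_filter, if_neg hmi.ne']
  refine sum_congr rfl fun j _ => ?_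
  by_cases hjm : ℓ j = m
  · simp [hjm, not_le.2 hmi]
  · simp [hjm]

variable (hmin : ∀ j ∈ s, m ≤ ℓ j)
include hmin

lemma interference_of_eq_min {i : ι} (him : ℓ i = m) :
    interference ℓ f (s.filter fun j => (if ℓ j = m then π j else c' j) =
        if ℓ i = m then π i else c' i) i =
      LocalSearch.load (s.filter (ℓ · = m)) (colourWeight f (s.filter (ℓ · ≠ m)) c') f π i
        (π i) := by
  simp only [interference, LocalSearch.load, LocalSearch.classWeight, colourWeight,
    filter_filter, sum_filter, if_pos him, ← sum_add_distrib]
  refine sum_congr rfl fun j hj => ?_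
  by_cases hjm : ℓ j = m
  · simp [hjm, him, and_comm]
  · have hji : j ≠ i := by rintro rfl; exact hjm him
    simp [hjm, hji, him ▸ hmin j hj]

lemma sum_load_of_eq_min [Fintype κ] {i : ι} (him : ℓ i = m) :
    ∑ k, LocalSearch.load (s.filter (ℓ · = m)) (colourWeight f (s.filter (ℓ · ≠ m)) c') f π i k =
      interference ℓ f s i := by
  rw [LocalSearch.sum_load]
  simp only [colourWeight]
  rw [sum_fiberwise, ← filter_ne', filter_filter, interference, sum_filter, sum_filter,
    sum_filter, ← sum_add_distrib]
  refine sum_congr rfl fun j hj => ?_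
  by_cases hjm : ℓ j = m
  · simp [hjm, him]
  · have hji : j ≠ i := by rintro rfl; exact hjm him
    simp [hjm, hji, him ▸ hmin j hj]

end Extension

theorem exists_forall_interference_lt_one [Fintype κ] [DecidableEq κ] [Nonempty κ]
    (hf : ∀ i j, 0 ≤ f i j) (hsymm : ∀ i j, ℓ i = ℓ j → f i j = f j i) {K : ℝ}
    (hK : K < Fintype.card κ) (s : Finset ι) (h : ∀ i ∈ s, interference ℓ f s i ≤ K) :
    ∃ c : ι → κ, ∀ i ∈ s, interference ℓ f (s.filter (c · = c i)) i < 1 := by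
  induction s using Finset.strongInduction with
  | H s ih =>
  rcases s.eq_empty_or_nonempty with rfl | hs
  · exact ⟨fun _ => Classical.arbitrary κ, by simp⟩
  obtain ⟨i₀, hi₀, hmin⟩ := s.exists_min_image ℓ hs
  set m := ℓ i₀
  obtain ⟨c', hc'⟩ := ih (s.filter (ℓ · ≠ m)) (filter_ssubset.2 ⟨i₀, hi₀, not_not.2 rfl⟩)
    fun i hi => (interference_mono hf (filter_subset _ _) i).trans (h i (mem_of_mem_filter _ hi))
  obtain ⟨π, hπ⟩ := LocalSearch.exists_forall_load_le (s := s.filter (ℓ · = m))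
    (b := colourWeight f (s.filter (ℓ · ≠ m)) c') (w := f)
    fun x hx y hy => hsymm x y ((mem_filter.1 hx).2.trans (mem_filter.1 hy).2.symm)
  refine ⟨fun i => if ℓ i = m then π i else c' i, fun i hi => ?_⟩
  beta_reduce
  by_cases him : ℓ i = m
  · have hcard := LocalSearch.card_mul_load_le (hπ i (mem_filter.2 ⟨hi, him⟩))
    rw [sum_load_of_eq_min c' π hmin him] at hcard
    rw [interference_of_eq_min c' π hmin him]
    refine lt_of_mul_lt_mul_left ?_ (Nat.cast_nonneg (Fintype.card κ))
    linarith [h i hi]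
  · rw [interference_of_min_lt c' π (lt_of_le_of_ne (hmin i hi) (Ne.symm him))]
    exact hc' i (mem_filter.2 ⟨hi, him⟩)

end Interference

lemma dd_comm (i j : Link) : dd i j = dd j i := by
  unfold dd
  rw [min_min_min_comm, dist_comm j.1 i.1, dist_comm j.1 i.2, dist_comm j.2 i.1,
    dist_comm j.2 i.2]

lemma dd_nonneg (i j : Link) : 0 ≤ dd i j := by
  unfold dd; positivity

theorem interference_refinement_general (α K : ℝ) (S : Finset Link)
    (h : ∀ i ∈ S,
      ∑ j ∈ S.filter (fun j => j ≠ i ∧ len i ≤ len j), min 1 (len i ^ α / dd i j ^ α) ≤ K) :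
    ∃ c : Link → ℕ, (∀ i ∈ S, c i < ⌊K⌋₊ + 1) ∧
      ∀ k : ℕ, ∀ i ∈ S.filter (fun j => c j = k),
        ∑ j ∈ (S.filter (fun j => c j = k)).filter (fun j => j ≠ i ∧ len i ≤ len j),
          min 1 (len i ^ α / dd i j ^ α) < 1 := by
  have hnonneg (i j : Link) : 0 ≤ min 1 (len i ^ α / dd i j ^ α) :=
    le_min zero_le_one (by have := dd_nonneg i j; unfold len; positivity)
  have hsymm (i j : Link) (hij : len i = len j) :
      min 1 (len i ^ α / dd i j ^ α) = min 1 (len j ^ α / dd j i ^ α) := by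
    rw [hij, dd_comm]
  obtain ⟨c, hc⟩ := exists_forall_interference_lt_one (κ := Fin (⌊K⌋₊ + 1)) hnonneg hsymm
    (by simpa using Nat.lt_floor_add_one K) S h
  refine ⟨fun i => c i, fun i _ => (c i).isLt, fun k i hi => ?_⟩
  obtain ⟨hiS, rfl⟩ := mem_filter.1 hi
  simpa only [interference, Fin.val_inj] using hc i hiS

/-- If for every link of `S` the capped interference from not-shorter links
in `S` is at most `K`, then `S` can be partitioned into at most `⌊K⌋ + 1` subsets such that
within each subset this interference is below `1`. -/
theorem interference_refinement (α K : ℝ) (hα : 0 < α) (hK : 0 ≤ K) (S : Finset Link)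
    (hlinks : ∀ i ∈ S, i.1 ≠ i.2)
    (h : ∀ i ∈ S,
      ∑ j ∈ S.filter (fun j => j ≠ i ∧ len i ≤ len j), min 1 (len i ^ α / dd i j ^ α) ≤ K) :
    ∃ c : Link → ℕ, (∀ i ∈ S, c i < ⌊K⌋₊ + 1) ∧
      ∀ k : ℕ, ∀ i ∈ S.filter (fun j => c j = k),
        ∑ j ∈ (S.filter (fun j => c j = k)).filter (fun j => j ≠ i ∧ len i ≤ len j),
          min 1 (len i ^ α / dd i j ^ α) < 1 :=
  interference_refinement_general α K S h
end
end

section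
/- For every τ ∈ (0,1), α > 2, β > 0, and every Δ₀ > 0, there exist a constant c > 0 (depending only on α, β, τ) and a finite set R of n ≥ 2 distinct points on the real line whose diversity Δ(R) (the ratio of the maximum to the minimum pairwise distance in R) exceeds Δ₀, such that n ≥ c·log log Δ(R) and every set of links with endpoints in R that is pairwise node-disjoint and P_τ-feasible has size at most 1. Consequently, every partition of the arbitrarily oriented edges of any spanning tree of R into sets that are pairwise node-disjoint and P_τ-feasible has exactly n − 1 ≥ c·log log Δ(R) parts. -/
noncomputable section

open scoped BigOperators

/-!
Place `n + 1` points on the line at the partial sums of the gaps `G ^ γ ^ k` (`k < n`), where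
`2 γ ≤ min τ (1 - τ)` and the last gap `G ^ γ ^ n = M` is a large constant. The gaps shrink doubly
exponentially, so `|x a - x b|` is within a factor `2` of `G ^ γ ^ min a b`. The SINR condition
of a link `i` against a link `j` reads `β ℓⱼ ^ (τ α) ℓᵢ ^ ((1 - τ) α) ≤ d_{ji} ^ α`, which in
exponents of `G` asks for `τ γ ^ mⱼ + (1 - τ) γ ^ mᵢ ≤ γ ^ q`, up to a slack `γ ^ n` paid for by
`M`. For two node-disjoint links, the smallest index `m` among their endpoints lies on one of
them, and one of the two cross distances avoids `m`, so its `q` is at least `m + 1`; since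
`2 γ ≤ min τ (1 - τ)`, the link whose SINR involves that cross distance fails. The diversity lies
between `2 ^ (n - 2)` and `2 M ^ γ⁻¹ ^ n`, so `log log Δ = O(n)`.
-/

open Real Filter Finset

lemma sum_Ico_le_two_mul_of_two_mul_succ_le {g : ℕ → ℝ} {a b : ℕ} (hab : a < b)
    (hg0 : ∀ m, 0 ≤ g m) (hg : ∀ m, m + 1 < b → 2 * g (m + 1) ≤ g m) :
    ∑ m ∈ Ico a b, g m ≤ 2 * g a := by
  obtain ⟨c, rfl⟩ : ∃ c, b = c + 1 := ⟨b - 1, by omega⟩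
  suffices ∑ m ∈ Ico a (c + 1), g m + g c ≤ 2 * g a by linarith [hg0 c]
  induction c, Nat.lt_succ_iff.1 hab using Nat.le_induction with
  | base => rw [Nat.Ico_succ_singleton, sum_singleton]; linarith
  | succ c hac ih =>
    rw [sum_Ico_succ_top (by omega)]
    linarith [ih (by omega) fun m hm => hg m (by omega), hg c (by omega)]

lemma two_pow_mul_le_of_two_mul_succ_le {g : ℕ → ℝ} {k : ℕ}
    (hg : ∀ m < k, 2 * g (m + 1) ≤ g m) : 2 ^ k * g k ≤ g 0 := by
  induction k with
  | zero => simp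
  | succ k ih =>
    calc 2 ^ (k + 1) * g (k + 1) = 2 ^ k * (2 * g (k + 1)) := by ring
      _ ≤ 2 ^ k * g k := by gcongr; exact hg k k.lt_succ_self
      _ ≤ g 0 := ih fun m hm => hg m (by omega)

lemma two_mul_rpow_pow_succ_le {G γ : ℝ} {m n : ℕ} (hγ0 : 0 < γ) (hγ : γ ≤ 1 / 2)
    (hG : 1 ≤ G) (hGn : 2 ≤ G ^ γ ^ n) (hm : m < n) : 2 * G ^ γ ^ (m + 1) ≤ G ^ γ ^ m := by
  have hexp : γ ^ n ≤ γ ^ m - γ ^ (m + 1) :=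
    calc γ ^ n ≤ γ ^ (m + 1) := pow_le_pow_of_le_one hγ0.le (by linarith) hm
      _ = γ * γ ^ m := pow_succ' γ m
      _ ≤ (1 - γ) * γ ^ m := by gcongr; linarith
      _ = γ ^ m - γ ^ (m + 1) := by ring
  calc 2 * G ^ γ ^ (m + 1) ≤ G ^ γ ^ n * G ^ γ ^ (m + 1) := by gcongr
    _ ≤ G ^ (γ ^ m - γ ^ (m + 1)) * G ^ γ ^ (m + 1) := by gcongr
    _ = G ^ γ ^ m := by rw [← rpow_add (by linarith)]; ring_nf

lemma pow_add_pow_le_mul_pow_add {γ θ e : ℝ} {m q n : ℕ} (hγ0 : 0 < γ) (hγ1 : γ ≤ 1)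
    (hθ : 2 * γ ≤ θ) (he : 0 ≤ e) (hq : m < q) (hn : m < n) : γ ^ q + γ ^ n ≤ θ * γ ^ m + e := by
  have hq' : γ ^ q ≤ γ * γ ^ m := pow_succ' γ m ▸ pow_le_pow_of_le_one hγ0.le hγ1 hq
  have hn' : γ ^ n ≤ γ * γ ^ m := pow_succ' γ m ▸ pow_le_pow_of_le_one hγ0.le hγ1 hn
  nlinarith [pow_pos hγ0 m]

/-- SINR of the link `s → r` against the single interferer `s' → r'` under `P_τ`. -/
def ObliviousSINR (α β τ s r s' r' : ℝ) : Prop :=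
  β * (|s' - r'| ^ (τ * α) / |s' - r| ^ α) ≤ |s - r| ^ (τ * α) / |s - r| ^ α

lemma not_obliviousSINR {G α β τ eᵢ eⱼ e e₀ s r s' r' : ℝ} (hG : 1 ≤ G) (hα : 0 < α)
    (hτ0 : 0 ≤ τ) (hτ1 : τ ≤ 1) (hβ : 2 ^ α < β * (G ^ e₀) ^ α)
    (he : e + e₀ ≤ τ * eⱼ + (1 - τ) * eᵢ) (hl : G ^ eᵢ ≤ |s - r|) (hl' : G ^ eⱼ ≤ |s' - r'|)
    (hd₀ : G ^ e ≤ |s' - r|) (hd : |s' - r| ≤ 2 * G ^ e) : ¬ ObliviousSINR α β τ s r s' r' := by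
  have hG0 : 0 < G := by linarith
  have hl0 : 0 < |s - r| := (rpow_pos_of_pos hG0 _).trans_le hl
  have hd0 : 0 < |s' - r| := (rpow_pos_of_pos hG0 _).trans_le hd₀
  have hβ0 : 0 < β := pos_of_mul_pos_left ((rpow_pos_of_pos two_pos α).trans hβ) (by positivity)
  have key : |s' - r| ^ α < β * (|s' - r'| ^ (τ * α) * |s - r| ^ ((1 - τ) * α)) :=
    calc |s' - r| ^ α ≤ (2 * G ^ e) ^ α := by gcongr
      _ = 2 ^ α * G ^ (e * α) := by
        rw [mul_rpow zero_le_two (by positivity), ← rpow_mul hG0.le]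
      _ < β * (G ^ e₀) ^ α * G ^ (e * α) := by gcongr
      _ = β * G ^ ((e + e₀) * α) := by
        rw [← rpow_mul hG0.le, mul_assoc, ← rpow_add hG0]; ring_nf
      _ ≤ β * G ^ ((τ * eⱼ + (1 - τ) * eᵢ) * α) := by gcongr
      _ = β * ((G ^ eⱼ) ^ (τ * α) * (G ^ eᵢ) ^ ((1 - τ) * α)) := by
        rw [← rpow_mul hG0.le, ← rpow_mul hG0.le, ← rpow_add hG0]; ring_nf
      _ ≤ β * (|s' - r'| ^ (τ * α) * |s - r| ^ ((1 - τ) * α)) := by gcongr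
  have hsplit : |s - r| ^ α = |s - r| ^ (τ * α) * |s - r| ^ ((1 - τ) * α) := by
    rw [← rpow_add hl0]; ring_nf
  rw [ObliviousSINR, not_le, hsplit, div_mul_cancel_left₀ (rpow_pos_of_pos hl0 _).ne',
    ← mul_div_assoc, lt_div_iff₀ (rpow_pos_of_pos hd0 _),
    inv_mul_lt_iff₀ (rpow_pos_of_pos hl0 _)]
  linarith

lemma dist_emb (a b : ℝ) : dist (emb a) (emb b) = |a - b| := by
  rw [EuclideanSpace.dist_eq]
  simp [emb, Fin.sum_univ_two, Real.dist_eq, Real.sqrt_sq_eq_abs]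

lemma emb_injective : Function.Injective emb :=
  (WithLp.equiv 2 _).symm.injective.comp fun a b h => by simpa using congrFun h 0

lemma PFeasible.mul_div_le {α β : ℝ} {S : Finset Link} {P : Link → ℝ} (h : PFeasible α β S P)
    (hβ : 0 ≤ β) {i j : Link} (hi : i ∈ S) (hj : j ∈ S) (hji : j ≠ i) :
    β * (P j / dist j.1 i.2 ^ α) ≤ P i / len i ^ α := by
  refine le_trans ?_ (h.2 i hi)
  gcongr
  exact single_le_sum (f := fun k => P k / dist k.1 i.2 ^ α)
    (fun k hk => div_nonneg (h.1 k (mem_of_mem_erase hk)).le (rpow_nonneg dist_nonneg _))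
    (mem_erase.2 ⟨hji, hj⟩)

lemma PFeasible.obliviousSINR {α β τ : ℝ} {S : Finset Link}
    (h : PFeasible α β S (oblPower α τ)) (hβ : 0 ≤ β) {s r s' r' : ℝ} (hi : (emb s, emb r) ∈ S)
    (hj : (emb s', emb r') ∈ S) (hji : (emb s', emb r') ≠ (emb s, emb r)) :
    ObliviousSINR α β τ s r s' r' := by
  simpa only [ObliviousSINR, oblPower, len, dist_emb] using h.mul_div_le hβ hi hj hji

lemma div_le_ptDiversity {R : Finset ℝ} {a b c d : ℝ} (ha : a ∈ R) (hb : b ∈ R) (hc : c ∈ R)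
    (hd : d ∈ R) (hab : a ≠ b) (hcd : c ≠ d) : |a - b| / |c - d| ≤ ptDiversity R := by
  have hab' : (a, b) ∈ R.offDiag := mem_offDiag.2 ⟨ha, hb, hab⟩
  have hcd' : (c, d) ∈ R.offDiag := mem_offDiag.2 ⟨hc, hd, hcd⟩
  rw [ptDiversity, dif_pos ⟨_, hab'⟩]
  have hsup := le_sup' (fun p : ℝ × ℝ => |p.1 - p.2|) hab'
  refine div_le_div₀ ((abs_nonneg _).trans hsup) hsup ?_
    (inf'_le (fun p : ℝ × ℝ => |p.1 - p.2|) hcd')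
  exact (lt_inf'_iff _).2 fun p hp => abs_pos.2 (sub_ne_zero.2 (mem_offDiag.1 hp).2.2)

lemma ptDiversity_le_div {R : Finset ℝ} {L U : ℝ} (hR : R.offDiag.Nonempty) (hL : 0 < L)
    (h : ∀ a ∈ R, ∀ b ∈ R, a ≠ b → L ≤ |a - b| ∧ |a - b| ≤ U) : ptDiversity R ≤ U / L := by
  have hbounds : ∀ p ∈ R.offDiag, L ≤ |p.1 - p.2| ∧ |p.1 - p.2| ≤ U := fun p hp =>
    h _ (mem_offDiag.1 hp).1 _ (mem_offDiag.1 hp).2.1 (mem_offDiag.1 hp).2.2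
  obtain ⟨p, hp⟩ := hR
  rw [ptDiversity, dif_pos ⟨p, hp⟩]
  exact div_le_div₀ (hL.le.trans ((hbounds p hp).1.trans (hbounds p hp).2))
    (sup'_le _ _ fun q hq => (hbounds q hq).2) hL (le_inf' _ _ fun q hq => (hbounds q hq).1)

lemma log_two_add_log_add_log_log_pos {M K : ℝ} (hM : exp 1 ≤ M) (hK : 1 < K) :
    0 < log 2 + log K + log (log M) := by
  have hlogM : 1 ≤ log M := (le_log_iff_exp_le ((exp_pos 1).trans_le hM)).2 hM
  linarith [log_pos one_lt_two, log_pos hK, log_nonneg hlogM]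

lemma log_log_le_of_le_two_mul_rpow {M K Δ : ℝ} {n : ℕ} (hM : exp 1 ≤ M) (hK : 1 < K)
    (hΔ : 1 < Δ) (h : Δ ≤ 2 * M ^ K ^ n) :
    log (log Δ) ≤ (n + 1) * (log 2 + log K + log (log M)) := by
  have hM0 : 0 < M := (exp_pos 1).trans_le hM
  have hlogM : 1 ≤ log M := (le_log_iff_exp_le hM0).2 hM
  have hKn : 1 ≤ K ^ n := one_le_pow₀ hK.le
  have hlogΔ : log Δ ≤ 2 * K ^ n * log M :=
    calc log Δ ≤ log (2 * M ^ K ^ n) := log_le_log (by linarith) h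
      _ = log 2 + K ^ n * log M := by rw [log_mul two_ne_zero (by positivity), log_rpow hM0]
      _ ≤ 2 * K ^ n * log M := by
        nlinarith [log_two_lt_d9, mul_le_mul_of_nonneg_right hKn (by linarith : 0 ≤ log M)]
  have hloglog : log (log Δ) ≤ log 2 + n * log K + log (log M) :=
    calc log (log Δ) ≤ log (2 * K ^ n * log M) := log_le_log (log_pos hΔ) hlogΔ
      _ = log 2 + n * log K + log (log M) := by
        rw [log_mul (by positivity) (by linarith), log_mul two_ne_zero (by positivity), log_pow]
  nlinarith [log_pos one_lt_two, log_pos hK, log_nonneg hlogM, (Nat.cast_nonneg n : (0 : ℝ) ≤ n)]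

lemma card_image_eq_card_of_card_filter_le_one {ι κ : Type*} [DecidableEq κ] {S : Finset ι}
    {f : ι → κ} (h : ∀ k, (S.filter fun i => f i = k).card ≤ 1) : (S.image f).card = S.card :=
  card_image_iff.2 fun i hi j hj hij =>
    card_le_one.1 (h (f j)) i (mem_filter.2 ⟨hi, hij⟩) j (mem_filter.2 ⟨hj, rfl⟩)

def gapPoint (G γ : ℝ) (k : ℕ) : ℝ := ∑ m ∈ range k, G ^ γ ^ m

def gapPoints (G γ : ℝ) (n : ℕ) : Finset ℝ := (range (n + 1)).image (gapPoint G γ)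

section GapPoints

variable {G γ α β τ : ℝ} {n : ℕ}

lemma gapPoint_strictMono (hG : 1 ≤ G) : StrictMono (gapPoint G γ) :=
  strictMono_nat_of_lt_succ fun k => by
    rw [gapPoint, gapPoint, sum_range_succ]
    linarith [rpow_pos_of_pos (by linarith : (0 : ℝ) < G) (γ ^ k)]

lemma card_gapPoints (hG : 1 ≤ G) : (gapPoints G γ n).card = n + 1 := by
  rw [gapPoints, card_image_of_injective _ (gapPoint_strictMono hG).injective, card_range]

lemma abs_gapPoint_sub_mem (hγ0 : 0 < γ) (hγ : γ ≤ 1 / 2) (hG : 1 ≤ G) (hGn : 2 ≤ G ^ γ ^ n)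
    {a b : ℕ} (hab : a ≠ b) (ha : a ≤ n) (hb : b ≤ n) :
    G ^ γ ^ min a b ≤ |gapPoint G γ a - gapPoint G γ b| ∧
      |gapPoint G γ a - gapPoint G γ b| ≤ 2 * G ^ γ ^ min a b := by
  wlog hlt : a < b generalizing a b
  · rw [abs_sub_comm, min_comm]
    exact this hab.symm hb ha (by omega)
  have hpos : ∀ m, 0 ≤ G ^ γ ^ m := fun m => rpow_nonneg (by linarith) _
  have hsub : gapPoint G γ b - gapPoint G γ a = ∑ m ∈ Ico a b, G ^ γ ^ m :=
    (sum_Ico_eq_sub _ hlt.le).symm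
  rw [abs_sub_comm, abs_of_nonneg (hsub ▸ sum_nonneg fun m _ => hpos m), hsub, min_eq_left hlt.le]
  exact ⟨single_le_sum (fun m _ => hpos m) (left_mem_Ico.2 hlt),
    sum_Ico_le_two_mul_of_two_mul_succ_le hlt hpos fun m hm =>
      two_mul_rpow_pow_succ_le hγ0 hγ hG hGn (by omega)⟩

lemma not_obliviousSINR_and (hγ0 : 0 < γ) (hγτ : 2 * γ ≤ τ) (hγτ' : 2 * γ ≤ 1 - τ) (hG : 1 ≤ G)
    (hGn : 2 ≤ G ^ γ ^ n) (hα : 0 < α) (hβ : 2 ^ α < β * (G ^ γ ^ n) ^ α)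
    {a₁ a₂ a₃ a₄ : ℕ} (h₁ : a₁ ≤ n) (h₂ : a₂ ≤ n) (h₃ : a₃ ≤ n) (h₄ : a₄ ≤ n)
    (h₁₂ : a₁ ≠ a₂) (h₁₃ : a₁ ≠ a₃) (h₁₄ : a₁ ≠ a₄) (h₂₃ : a₂ ≠ a₃) (h₂₄ : a₂ ≠ a₄)
    (h₃₄ : a₃ ≠ a₄) :
    ¬ (ObliviousSINR α β τ (gapPoint G γ a₁) (gapPoint G γ a₂) (gapPoint G γ a₃) (gapPoint G γ a₄) ∧
      ObliviousSINR α β τ (gapPoint G γ a₃) (gapPoint G γ a₄) (gapPoint G γ a₁)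
        (gapPoint G γ a₂)) := by
  wlog hle : min a₁ a₂ ≤ min a₃ a₄ generalizing a₁ a₂ a₃ a₄
  · exact fun h => this h₃ h₄ h₁ h₂ h₃₄ h₁₃.symm h₂₃.symm h₁₄.symm h₂₄.symm h₁₂ (by omega) h.symm
  have hγ : γ ≤ 1 / 2 := by linarith
  have hx {a b : ℕ} (hab : a ≠ b) (ha : a ≤ n) (hb : b ≤ n) :=
    abs_gapPoint_sub_mem hγ0 hγ hG hGn hab ha hb
  have hpos : ∀ k : ℕ, 0 ≤ γ ^ k := fun k => pow_nonneg hγ0.le k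
  -- If the smallest index is `a₁`, the cross distance `|x a₃ - x a₂|` avoids it and the link
  -- `a₁ → a₂` fails; if it is `a₂`, then `|x a₁ - x a₄|` avoids it and `a₃ → a₄` fails.
  rcases h₁₂.lt_or_gt with h | h
  · refine fun hsinr => not_obliviousSINR hG hα (by linarith) (by linarith) hβ ?_
      (hx h₁₂ h₁ h₂).1 (hx h₃₄ h₃ h₄).1 (hx h₂₃.symm h₃ h₂).1 (hx h₂₃.symm h₃ h₂).2 hsinr.1
    rw [min_eq_left h.le]
    linarith [pow_add_pow_le_mul_pow_add (e := τ * γ ^ min a₃ a₄) hγ0 (by linarith) hγτ'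
      (mul_nonneg (by linarith) (hpos _)) (show a₁ < min a₃ a₂ by omega) (by omega : a₁ < n)]
  · refine fun hsinr => not_obliviousSINR hG hα (by linarith) (by linarith) hβ ?_
      (hx h₃₄ h₃ h₄).1 (hx h₁₂ h₁ h₂).1 (hx h₁₄ h₁ h₄).1 (hx h₁₄ h₁ h₄).2 hsinr.2
    rw [min_eq_right h.le]
    linarith [pow_add_pow_le_mul_pow_add (e := (1 - τ) * γ ^ min a₃ a₄) hγ0 (by linarith) hγτ
      (mul_nonneg (by linarith) (hpos _)) (show a₂ < min a₁ a₄ by omega) (by omega : a₂ < n)]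

lemma two_pow_le_ptDiversity_gapPoints {k : ℕ} (hγ0 : 0 < γ) (hγ : γ ≤ 1 / 2) (hG : 1 ≤ G)
    (hGn : 2 ≤ G ^ γ ^ (k + 2)) : (2 : ℝ) ^ k ≤ ptDiversity (gapPoints G γ (k + 2)) := by
  have hmem : ∀ a ≤ k + 2, gapPoint G γ a ∈ gapPoints G γ (k + 2) := fun a ha =>
    mem_image_of_mem _ (mem_range.2 (by omega))
  have hfar := (abs_gapPoint_sub_mem hγ0 hγ hG hGn (a := 0) (b := k + 2) (by omega) (by omega)
    le_rfl).1
  obtain ⟨hnear₀, hnear⟩ := abs_gapPoint_sub_mem hγ0 hγ hG hGn (a := k + 1) (b := k + 2)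
    (by omega) (by omega) le_rfl
  have hdecay : 2 ^ (k + 1) * G ^ γ ^ (k + 1) ≤ G ^ γ ^ 0 :=
    two_pow_mul_le_of_two_mul_succ_le (g := fun m => G ^ γ ^ m) fun _ hm =>
      two_mul_rpow_pow_succ_le hγ0 hγ hG hGn (by omega)
  have hpos : 0 < G ^ γ ^ (k + 1) := rpow_pos_of_pos (by linarith) _
  simp only [Nat.zero_min, Nat.min_eq_left (Nat.le_succ (k + 1))] at hfar hnear₀ hnear
  refine le_trans ?_ (div_le_ptDiversity (hmem 0 (by omega)) (hmem (k + 2) le_rfl)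
    (hmem (k + 1) (by omega)) (hmem (k + 2) le_rfl) ?_ ?_)
  · rw [le_div_iff₀ (hpos.trans_le hnear₀)]
    calc 2 ^ k * |gapPoint G γ (k + 1) - gapPoint G γ (k + 2)|
        ≤ 2 ^ k * (2 * G ^ γ ^ (k + 1)) := by gcongr
      _ = 2 ^ (k + 1) * G ^ γ ^ (k + 1) := by ring
      _ ≤ |gapPoint G γ 0 - gapPoint G γ (k + 2)| := hdecay.trans hfar
  · exact (gapPoint_strictMono hG).injective.ne (by omega)
  · exact (gapPoint_strictMono hG).injective.ne (by omega)

lemma ptDiversity_gapPoints_le (hγ0 : 0 < γ) (hγ : γ ≤ 1 / 2) (hG : 1 ≤ G) (hGn : 2 ≤ G ^ γ ^ n)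
    (hn : 1 ≤ n) : ptDiversity (gapPoints G γ n) ≤ 2 * G := by
  have hmem : ∀ a ≤ n, gapPoint G γ a ∈ gapPoints G γ n := fun a ha =>
    mem_image_of_mem _ (mem_range.2 (by omega))
  have hR : (gapPoints G γ n).offDiag.Nonempty := ⟨(gapPoint G γ 0, gapPoint G γ 1),
    mem_offDiag.2 ⟨hmem 0 (by omega), hmem 1 hn, (gapPoint_strictMono hG).injective.ne zero_ne_one⟩⟩
  refine div_one (2 * G) ▸ ptDiversity_le_div hR one_pos ?_
  simp only [gapPoints, mem_image, mem_range]
  rintro _ ⟨a, ha, rfl⟩ _ ⟨b, hb, rfl⟩ hab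
  have hx := abs_gapPoint_sub_mem hγ0 hγ hG hGn (ne_of_apply_ne _ hab) (by omega) (by omega)
  have hexp : γ ^ min a b ≤ 1 := pow_le_one₀ hγ0.le (by linarith)
  constructor
  · exact (one_le_rpow hG (by positivity)).trans hx.1
  · exact hx.2.trans (by gcongr; simpa using rpow_le_rpow_of_exponent_le hG hexp)

lemma mem_image_emb_gapPoints {p : Pt} :
    p ∈ (gapPoints G γ n).image emb ↔ ∃ a ≤ n, emb (gapPoint G γ a) = p := by
  simp [gapPoints]

lemma card_le_one_of_pFeasible_gapPoints (hγ0 : 0 < γ) (hγτ : 2 * γ ≤ τ) (hγτ' : 2 * γ ≤ 1 - τ)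
    (hG : 1 ≤ G) (hGn : 2 ≤ G ^ γ ^ n) (hα : 0 < α) (hβ0 : 0 < β)
    (hβ : 2 ^ α < β * (G ^ γ ^ n) ^ α) (T : Finset Link)
    (hT : ∀ i ∈ T, i.1 ∈ (gapPoints G γ n).image emb ∧ i.2 ∈ (gapPoints G γ n).image emb ∧
      i.1 ≠ i.2)
    (hdisj : ∀ i ∈ T, ∀ j ∈ T, i ≠ j → NodeDisjoint i j)
    (hfeas : PFeasible α β T (oblPower α τ)) : T.card ≤ 1 := by
  rw [card_le_one]
  rintro ⟨p₁, p₂⟩ hi ⟨p₃, p₄⟩ hj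
  by_contra hij
  obtain ⟨⟨a₁, h₁, rfl⟩, ⟨a₂, h₂, rfl⟩, h₁₂⟩ := (hT _ hi).imp mem_image_emb_gapPoints.1
    (And.imp_left mem_image_emb_gapPoints.1)
  obtain ⟨⟨a₃, h₃, rfl⟩, ⟨a₄, h₄, rfl⟩, h₃₄⟩ := (hT _ hj).imp mem_image_emb_gapPoints.1
    (And.imp_left mem_image_emb_gapPoints.1)
  obtain ⟨h₁₃, h₁₄, h₂₃, h₂₄⟩ := hdisj _ hi _ hj hij
  have hx {a b : ℕ} : emb (gapPoint G γ a) ≠ emb (gapPoint G γ b) → a ≠ b :=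
    ne_of_apply_ne fun a => emb (gapPoint G γ a)
  exact not_obliviousSINR_and hγ0 hγτ hγτ' hG hGn hα hβ h₁ h₂ h₃ h₄ (hx h₁₂) (hx h₁₃) (hx h₁₄)
    (hx h₂₃) (hx h₂₄) (hx h₃₄)
    ⟨hfeas.obliviousSINR hβ0.le hi hj (Ne.symm hij), hfeas.obliviousSINR hβ0.le hj hi hij⟩

end GapPoints

/-- For any oblivious power scheme `P_τ` there are line networks of
arbitrarily large diversity `Δ` on `n = Ω(log log Δ)` points in which no two node-disjoint
links can be simultaneously `P_τ`-feasible; consequently, any partition of (an arbitrarily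
oriented) spanning tree of the pointset into pairwise node-disjoint `P_τ`-feasible sets has
exactly `n - 1` parts. -/
theorem oblivious_power_rate_lower_bound (α β τ : ℝ)
    (hα : 2 < α) (hβ : 0 < β) (hτ : τ ∈ Set.Ioo (0 : ℝ) 1) :
    ∃ c : ℝ, 0 < c ∧ ∀ Δ₀ : ℝ, 0 < Δ₀ →
      ∃ R : Finset ℝ, 2 ≤ R.card ∧ Δ₀ < ptDiversity R ∧
        c * Real.log (Real.log (ptDiversity R)) ≤ (R.card : ℝ) ∧
        (∀ T : Finset Link,
           (∀ i ∈ T, i.1 ∈ R.image emb ∧ i.2 ∈ R.image emb ∧ i.1 ≠ i.2) →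
           (∀ i ∈ T, ∀ j ∈ T, i ≠ j → NodeDisjoint i j) →
           PFeasible α β T (oblPower α τ) → T.card ≤ 1) ∧
        (∀ S : Finset Link, IsSpanningTreeLinks (R.image emb) S →
           ∀ col : Link → ℕ,
             (∀ k : ℕ,
                (∀ i ∈ S.filter (fun i => col i = k), ∀ j ∈ S.filter (fun i => col i = k),
                   i ≠ j → NodeDisjoint i j) ∧
                PFeasible α β (S.filter fun i => col i = k) (oblPower α τ)) →
             (S.image col).card = R.card - 1) := by
  obtain ⟨hτ0, hτ1⟩ := hτ
  have hα0 : 0 < α := by linarith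
  obtain ⟨γ, hγ0, hγτ, hγτ'⟩ : ∃ γ : ℝ, 0 < γ ∧ 2 * γ ≤ τ ∧ 2 * γ ≤ 1 - τ :=
    ⟨min τ (1 - τ) / 2, half_pos (lt_min hτ0 (sub_pos.2 hτ1)),
      by linarith [min_le_left τ (1 - τ)], by linarith [min_le_right τ (1 - τ)]⟩
  have hγ1 : 1 < γ⁻¹ := (one_lt_inv₀ hγ0).2 (by linarith)
  obtain ⟨M, hMe, hMβ⟩ := ((eventually_ge_atTop (exp 1)).and
    (((tendsto_rpow_atTop hα0).const_mul_atTop hβ).eventually_gt_atTop (2 ^ α))).exists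
  have hM2 : 2 ≤ M := by linarith [add_one_le_exp 1]
  have hA := log_two_add_log_add_log_log_pos hMe hγ1
  refine ⟨(log 2 + log γ⁻¹ + log (log M))⁻¹, inv_pos.2 hA, fun Δ₀ hΔ₀ => ?_⟩
  set k := ⌈Δ₀⌉₊
  set G := M ^ γ⁻¹ ^ (k + 2)
  have hGn : G ^ γ ^ (k + 2) = M := by
    rw [← rpow_mul (by linarith), ← mul_pow, inv_mul_cancel₀ hγ0.ne', one_pow, rpow_one]
  have hG : 1 ≤ G := one_le_rpow (by linarith) (by positivity)
  rw [← hGn] at hM2 hMβ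
  have hΔ := two_pow_le_ptDiversity_gapPoints hγ0 (by linarith) hG hM2
  have hk : Δ₀ < 2 ^ k := (Nat.le_ceil Δ₀).trans_lt (by exact_mod_cast Nat.lt_two_pow_self)
  have hk1 : (1 : ℝ) < 2 ^ k := one_lt_pow₀ one_lt_two (Nat.ceil_pos.2 hΔ₀).ne'
  have hfeas := card_le_one_of_pFeasible_gapPoints hγ0 hγτ hγτ' hG hM2 hα0 hβ hMβ
  refine ⟨gapPoints G γ (k + 2), ?_, hk.trans_le hΔ, ?_, hfeas, ?_⟩
  · rw [card_gapPoints hG]; omega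
  · rw [inv_mul_le_iff₀ hA, card_gapPoints hG]
    have := log_log_le_of_le_two_mul_rpow hMe hγ1 (hk1.trans_le hΔ)
      (ptDiversity_gapPoints_le hγ0 (by linarith) hG hM2 (by omega))
    push_cast at this ⊢
    linarith
  · intro S hS col hcol
    have hS' := hS.2.1
    rw [card_image_of_injective _ emb_injective] at hS'
    rw [card_image_eq_card_of_card_filter_le_one fun k =>
      hfeas _ (fun i hi => hS.1 i (mem_filter.1 hi).1) (hcol k).1 (hcol k).2]
    omega
end
end
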